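/- Weak Union in the probabilistic model: let f be an input-preserving Markov kernel and Z, X, Y, W ⊆ Var. If there exist input-preserving Markov kernels f1 : Mem(∅) → D(Mem(Z)), f2 : Mem(Z) → D(Mem(Z ∪ X)), f3 : Mem(Z) → D(Mem(Z ∪ Y ∪ W)) with f1 ⊙ (f2 ⊕ f3) ⊑ f, then there exist input-preserving Markov kernels g1 : Mem(∅) → D(Mem(Z ∪ W)), g2 : Mem(Z ∪ W) → D(Mem(Z ∪ W ∪ X)), g3 : Mem(Z ∪ W) → D(Mem(Z ∪ W ∪ Y)) with g1 ⊙ (g2 ⊕ g3) ⊑ f. -/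

import Mathlib

open scoped ENNReal

/-- A memory over a set `S` of variables: an assignment of a value to each
variable in `S`. -/
def Mem (Val Var : Type) (S : Set Var) : Type := S → Val

/-- Restriction (projection) of a memory to a smaller domain. -/
def restr {Val Var : Type} {S T : Set Var} (h : T ⊆ S) (m : Mem Val Var S) :
    Mem Val Var T :=
  fun t => m ⟨t.1, h t.2⟩

/-- Two memories (over possibly different domains) agree if they coincide on the
intersection of their domains.  For `T ⊆ S`, `Agree m r` says exactly that `r`
is the restriction `m^T`. -/
def Agree {Val Var : Type} {S T : Set Var} (m : Mem Val Var S) (r : Mem Val Var T) : Prop :=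
  ∀ (i : Var) (h1 : i ∈ S) (h2 : i ∈ T), m ⟨i, h1⟩ = r ⟨i, h2⟩
/-- A (sub)distribution as a mass function into `ℝ≥0∞`; `IsDist μ` says the total
mass is `1`, i.e. `μ` is a (finitely supported, as all types involved are finite)
probability distribution. -/
def IsDist {α : Type*} (μ : α → ℝ≥0∞) : Prop := ∑' a, μ a = 1

open Classical in
/-- Marginalization of a mass function on memories over `S` to memories over `T`
(intended for `T ⊆ S`). -/
noncomputable def marg {Val Var : Type} {S : Set Var} (μ : Mem Val Var S → ℝ≥0∞)
    (T : Set Var) : Mem Val Var T → ℝ≥0∞ :=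
  fun r => ∑' m : Mem Val Var S, if Agree m r then μ m else 0

open Classical in
/-- The point mass (Dirac distribution) at a memory. -/
noncomputable def dirac {Val Var : Type} {S : Set Var} (d : Mem Val Var S) :
    Mem Val Var S → ℝ≥0∞ :=
  fun r => if r = d then 1 else 0

/-- A Markov-kernel-shaped map on memories, with explicit domain and range. -/
structure PKernel (Val Var : Type) where
  dom : Set Var
  ran : Set Var
  f : Mem Val Var dom → Mem Val Var ran → ℝ≥0∞

/-- Membership in `M^D`: `K` is a Markov kernel (every output is a probability
distribution) that preserves its input to its output (the marginal of `K.f d`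
on the domain is the point mass at `d`). -/
def InMD {Val Var : Type} (K : PKernel Val Var) : Prop :=
  K.dom ⊆ K.ran ∧ (∀ d, IsDist (K.f d)) ∧ (∀ d, marg (K.f d) K.dom = dirac d)

/-- Definedness condition for parallel composition. -/
def OplusDef {Val Var : Type} (K1 K2 : PKernel Val Var) : Prop :=
  K1.ran ∩ K2.ran = K1.dom ∩ K2.dom

/-- Parallel composition of kernels. -/
noncomputable def poplus {Val Var : Type} (K1 K2 : PKernel Val Var) : PKernel Val Var where
  dom := K1.dom ∪ K2.dom
  ran := K1.ran ∪ K2.ran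
  f := fun d m =>
    K1.f (restr Set.subset_union_left d) (restr Set.subset_union_left m) *
    K2.f (restr Set.subset_union_right d) (restr Set.subset_union_right m)

open Classical in
/-- Sequential (Kleisli) composition of kernels, defined when
`K1.ran = K2.dom` (and returning the zero kernel otherwise). -/
noncomputable def podot {Val Var : Type} (K1 K2 : PKernel Val Var) : PKernel Val Var where
  dom := K1.dom
  ran := K2.ran
  f := fun d m =>
    if h : K1.ran = K2.dom then
      ∑' m' : Mem Val Var K1.ran, K1.f d m' * K2.f (restr (le_of_eq h.symm) m') m
    else 0

open Classical in
/-- The identity (unit) kernel on memories over `R`. -/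
noncomputable def unitK (Val Var : Type) (R : Set Var) : PKernel Val Var where
  dom := R
  ran := R
  f := fun d => dirac d

/-- The preorder on kernels: `f ⊑ g` iff `g = (f ⊕ unit_R) ⊙ h` for some set of
variables `R` and some `h ∈ M^D` (with both compositions defined). -/
def ple {Val Var : Type} (K1 K2 : PKernel Val Var) : Prop :=
  ∃ (R : Set Var) (h : PKernel Val Var), InMD h ∧
    OplusDef K1 (unitK Val Var R) ∧
    (poplus K1 (unitK Val Var R)).ran = h.dom ∧
    K2 = podot (poplus K1 (unitK Val Var R)) h

/-
Write `μ = f1 ⊙ (f2 ⊕ f3)`, so `μ(m) = f1(m_Z) · f2(m_Z)(m_{Z∪X}) · f3(m_Z)(m_{Z∪Y∪W})`. Take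
for `g1` the `Z ∪ W`-marginal of `f1 ⊙ f3`, and for `g2`, `g3` the distributions `f2(m_Z)`,
`f3(m_Z)` conditioned on agreeing with the input `m` on `Z ∪ W`; disintegration gives
`g1 ⊙ g3 = f1 ⊙ f3`. Since `⊕` is a bare product of mass functions, the total mass `1` of `μ`,
inherited from `f` through `⊑`, forces `f2(z)` to agree almost surely with every `f3(z)`-outcome
of positive mass, so conditioning `f2` changes nothing on the support. Hence
`g1 ⊙ (g2 ⊕ g3) = μ`, and the witnesses of `μ ⊑ f` also witness `g1 ⊙ (g2 ⊕ g3) ⊑ f`.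
-/

open Set

variable {Val Var : Type}

theorem Agree.restr_eq {S T U : Set Var} {m : Mem Val Var S} {r : Mem Val Var T} (h : Agree m r)
    (hS : U ⊆ S) (hT : U ⊆ T) : restr hS m = restr hT r :=
  funext fun i => h i.1 (hS i.2) (hT i.2)

theorem agree_comm {S T : Set Var} {m : Mem Val Var S} {r : Mem Val Var T} :
    Agree m r ↔ Agree r m :=
  ⟨fun h i h1 h2 => (h i h2 h1).symm, fun h i h1 h2 => (h i h2 h1).symm⟩

theorem agree_iff_restr_eq {S T : Set Var} (hT : T ⊆ S) (m : Mem Val Var S) (r : Mem Val Var T) :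
    Agree m r ↔ restr hT m = r :=
  ⟨fun h => h.restr_eq hT subset_rfl, fun h i _ _ => by subst h; rfl⟩

theorem agree_restr_restr {S T U : Set Var} (hT : T ⊆ S) (hU : U ⊆ S) (m : Mem Val Var S) :
    Agree (restr hT m) (restr hU m) :=
  fun _ _ _ => rfl

section Glue

variable {A B : Set Var}

open Classical in
noncomputable def glue (a : Mem Val Var A) (b : Mem Val Var B) : Mem Val Var (A ∪ B) :=
  fun i => if h : i.1 ∈ A then a ⟨i.1, h⟩ else b ⟨i.1, i.2.resolve_left h⟩

theorem restr_glue_left (a : Mem Val Var A) (b : Mem Val Var B) :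
    restr subset_union_left (glue a b) = a :=
  funext fun i => dif_pos i.2

theorem restr_glue_right {a : Mem Val Var A} {b : Mem Val Var B} (h : Agree a b) :
    restr subset_union_right (glue a b) = b := by
  funext i
  simp only [restr, glue]
  split_ifs with hA
  · exact h i.1 hA i.2
  · rfl

theorem glue_restr (q : Mem Val Var (A ∪ B)) :
    glue (restr subset_union_left q) (restr subset_union_right q) = q := by
  funext i
  simp only [restr, glue]
  split_ifs <;> rfl

variable (A B) in
noncomputable def memUnionEquiv :
    Mem Val Var (A ∪ B) ≃ {p : Mem Val Var A × Mem Val Var B // Agree p.1 p.2} where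
  toFun q := ⟨(restr subset_union_left q, restr subset_union_right q),
    agree_restr_restr subset_union_left subset_union_right q⟩
  invFun p := glue p.1.1 p.1.2
  left_inv := glue_restr
  right_inv p := Subtype.ext (Prod.ext (restr_glue_left _ _) (restr_glue_right p.2))

open Classical in
theorem tsum_mem_union (F : Mem Val Var A → Mem Val Var B → ℝ≥0∞) :
    ∑' q : Mem Val Var (A ∪ B), F (restr subset_union_left q) (restr subset_union_right q) =
      ∑' a, ∑' b, if Agree a b then F a b else 0 := by
  rw [← (memUnionEquiv A B).symm.tsum_eq]
  calc _ = ∑' p : {p : Mem Val Var A × Mem Val Var B // Agree p.1 p.2}, F p.1.1 p.1.2 :=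
        tsum_congr fun p => by
          simp only [memUnionEquiv, Equiv.coe_fn_symm_mk, restr_glue_left, restr_glue_right p.2]
    _ = ∑' p : Mem Val Var A × Mem Val Var B, if Agree p.1 p.2 then F p.1 p.2 else 0 :=
        tsum_subtype {p : Mem Val Var A × Mem Val Var B | Agree p.1 p.2} (fun p => F p.1 p.2)
    _ = _ := ENNReal.tsum_prod (f := fun a b => if Agree a b then F a b else 0)

end Glue

section Marginal

open Classical

variable {S T : Set Var}

theorem le_marg {μ : Mem Val Var S → ℝ≥0∞} {m : Mem Val Var S} {r : Mem Val Var T}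
    (h : Agree m r) : μ m ≤ marg μ T r := by
  have := ENNReal.le_tsum (f := fun m' => if Agree m' r then μ m' else 0) m
  rwa [if_pos h] at this

theorem marg_le_tsum (μ : Mem Val Var S → ℝ≥0∞) (r : Mem Val Var T) :
    marg μ T r ≤ ∑' m, μ m :=
  ENNReal.tsum_le_tsum fun m => by split_ifs <;> simp

theorem marg_le_marg_restr {A C : Set Var} (hAC : A ⊆ C) (μ : Mem Val Var S → ℝ≥0∞)
    (v : Mem Val Var C) : marg μ C v ≤ marg μ A (restr hAC v) :=
  ENNReal.tsum_le_tsum fun m => by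
    by_cases hv : Agree m v
    · rw [if_pos hv, if_pos (show Agree m (restr hAC v) from fun i hS hA => hv i hS (hAC hA))]
    · rw [if_neg hv]
      exact zero_le

theorem marg_eq_tsum_of_inter_eq_empty (h : S ∩ T = ∅) (μ : Mem Val Var S → ℝ≥0∞)
    (r : Mem Val Var T) : marg μ T r = ∑' m, μ m :=
  tsum_congr fun _ => if_pos fun i hS hT => absurd (h ▸ ⟨hS, hT⟩ : i ∈ (∅ : Set Var)) id

theorem marg_ne_top {μ : Mem Val Var S → ℝ≥0∞} (hμ : IsDist μ) (r : Mem Val Var T) :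
    marg μ T r ≠ ⊤ :=
  ne_top_of_le_ne_top ENNReal.one_ne_top (hμ ▸ marg_le_tsum μ r)

theorem tsum_marg (hT : T ⊆ S) (μ : Mem Val Var S → ℝ≥0∞) :
    ∑' r, marg μ T r = ∑' m, μ m := by
  simp only [marg, agree_iff_restr_eq hT]
  rw [ENNReal.tsum_comm]
  exact tsum_congr fun m => by simp only [eq_comm (a := restr hT m), tsum_ite_eq]

theorem marg_eq_dirac_iff (hT : T ⊆ S) {μ : Mem Val Var S → ℝ≥0∞} (hμ : IsDist μ)
    (r : Mem Val Var T) : marg μ T = dirac r ↔ ∀ m, μ m ≠ 0 → Agree m r := by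
  constructor
  · intro h m hm
    by_contra hmr
    have hr : restr hT m ≠ r := fun he => hmr ((agree_iff_restr_eq hT m r).2 he)
    have : μ m ≤ marg μ T (restr hT m) := le_marg ((agree_iff_restr_eq hT m _).2 rfl)
    rw [h, dirac, if_neg hr, nonpos_iff_eq_zero] at this
    exact hm this
  · intro h
    funext r'
    have hsupp : ∀ m, (if Agree m r' then μ m else 0) = if r = r' then μ m else 0 := by
      intro m
      by_cases hm : μ m = 0
      · simp [hm]
      · rw [agree_iff_restr_eq hT, (agree_iff_restr_eq hT m r).1 (h m hm)]
    rw [marg, tsum_congr hsupp, dirac]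
    by_cases hr : r' = r
    · simp only [hr, if_true]
      exact hμ
    · simp only [hr, Ne.symm hr, if_false, tsum_zero]

theorem tsum_dirac_mul (c : Mem Val Var S) (F : Mem Val Var S → ℝ≥0∞) :
    ∑' v, dirac c v * F v = F c := by
  simp only [dirac, ite_mul, one_mul, zero_mul, tsum_ite_eq]

end Marginal

theorem eq_one_of_tsum_mul_eq_one {ι : Type*} {ν c : ι → ℝ≥0∞} (hν : ∑' i, ν i = 1)
    (hc : ∀ i, c i ≤ 1) (h : ∑' i, ν i * c i = 1) {i : ι} (hi : ν i ≠ 0) : c i = 1 := by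
  by_contra hci
  have hνi : ν i ≠ ⊤ := ne_top_of_le_ne_top ENNReal.one_ne_top (hν ▸ ENNReal.le_tsum i)
  have hlt : ν i * c i < ν i * 1 :=
    (ENNReal.mul_lt_mul_iff_right hi hνi).2 (lt_of_le_of_ne (hc i) hci)
  have := ENNReal.tsum_lt_tsum (h ▸ ENNReal.one_ne_top)
    (fun j => mul_le_of_le_one_right zero_le (hc j)) (by rwa [mul_one] at hlt)
  rw [h, hν] at this
  exact lt_irrefl _ this

namespace PKernel

def ExtendsInput (K : PKernel Val Var) : Prop :=
  ∀ d m, K.f d m ≠ 0 → Agree m d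

theorem ExtendsInput.poplus {K1 K2 : PKernel Val Var} (h1 : K1.dom ⊆ K1.ran)
    (h2 : K2.dom ⊆ K2.ran) (hK1 : K1.ExtendsInput) (hK2 : K2.ExtendsInput) :
    (poplus K1 K2).ExtendsInput := by
  intro d m hm i _ hi
  obtain ⟨hm1, hm2⟩ := mul_ne_zero_iff.1 hm
  rcases hi with hi | hi
  · exact hK1 _ _ hm1 i (h1 hi) hi
  · exact hK2 _ _ hm2 i (h2 hi) hi

end PKernel

theorem inMD_iff {K : PKernel Val Var} :
    InMD K ↔ K.dom ⊆ K.ran ∧ (∀ d, IsDist (K.f d)) ∧ K.ExtendsInput :=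
  ⟨fun ⟨hsub, hK, hmarg⟩ =>
      ⟨hsub, hK, fun d => (marg_eq_dirac_iff hsub (hK d) d).1 (hmarg d)⟩,
    fun ⟨hsub, hK, hext⟩ => ⟨hsub, hK, fun d => (marg_eq_dirac_iff hsub (hK d) d).2 (hext d)⟩⟩

theorem InMD.extendsInput {K : PKernel Val Var} (hK : InMD K) : K.ExtendsInput :=
  (inMD_iff.1 hK).2.2

theorem inMD_of_dom_eq_empty {K : PKernel Val Var} (h : K.dom = ∅) (hK : ∀ d, IsDist (K.f d)) :
    InMD K :=
  inMD_iff.2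
    ⟨h ▸ empty_subset _, hK, fun _ _ _ i _ hi => absurd (h ▸ hi : i ∈ (∅ : Set Var)) id⟩

theorem podot_f_of_extendsInput {K1 K2 : PKernel Val Var} (hK : K1.ran = K2.dom)
    (h2 : K2.dom ⊆ K2.ran) (hK2 : K2.ExtendsInput) (d : Mem Val Var K1.dom)
    (m : Mem Val Var K2.ran) :
    (podot K1 K2).f d m = K1.f d (restr (hK.le.trans h2) m) * K2.f (restr h2 m) m := by
  dsimp only [podot]
  rw [dif_pos hK, tsum_eq_single (restr (hK.le.trans h2) m)]
  · rfl
  intro x hx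
  suffices K2.f (restr hK.ge x) m = 0 by rw [this, mul_zero]
  by_contra h0
  exact hx (funext fun i => (hK2 _ _ h0 i (h2 (hK ▸ i.2)) (hK ▸ i.2)).symm)

theorem tsum_podot_f {K1 K2 : PKernel Val Var} (hK : K1.ran = K2.dom) (d : Mem Val Var K1.dom) :
    ∑' m, (podot K1 K2).f d m = ∑' x, K1.f d x * ∑' m, K2.f (restr hK.ge x) m := by
  simp only [podot, dif_pos hK]
  rw [ENNReal.tsum_comm]
  simp only [ENNReal.tsum_mul_left]

theorem isDist_podot {K1 K2 : PKernel Val Var} (hK : K1.ran = K2.dom) {d : Mem Val Var K1.dom}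
    (h1 : IsDist (K1.f d)) (h2 : ∀ x, IsDist (K2.f x)) : IsDist ((podot K1 K2).f d) := by
  have h2' : ∀ x, ∑' m, K2.f x m = 1 := h2
  rw [IsDist, tsum_podot_f hK]
  simp only [h2', mul_one]
  exact h1

theorem tsum_poplus_f (K1 K2 : PKernel Val Var) (d : Mem Val Var (K1.dom ∪ K2.dom)) :
    ∑' m, (poplus K1 K2).f d m =
      ∑' v, K2.f (restr subset_union_right d) v *
        marg (K1.f (restr subset_union_left d)) K2.ran v := by
  classical
  refine (tsum_mem_union (fun a b => K1.f (restr subset_union_left d) a *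
    K2.f (restr subset_union_right d) b)).trans ?_
  rw [ENNReal.tsum_comm]
  refine tsum_congr fun v => ?_
  rw [marg, ← ENNReal.tsum_mul_left]
  refine tsum_congr fun u => ?_
  split_ifs <;> simp [mul_comm]

theorem marg_podot_f {K1 K2 : PKernel Val Var} (hK : K1.ran = K2.dom) (h2 : K2.dom ⊆ K2.ran)
    (hK2 : K2.ExtendsInput) {A : Set Var} (hA : K2.dom ⊆ A) (d : Mem Val Var K1.dom)
    (a : Mem Val Var A) :
    marg (S := K2.ran) ((podot K1 K2).f d) A a =
      K1.f d (restr (hK.le.trans hA) a) * marg (K2.f (restr hA a)) A a := by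
  simp only [marg]
  rw [← ENNReal.tsum_mul_left]
  refine tsum_congr fun v => ?_
  by_cases hv : Agree v a
  · have e := podot_f_of_extendsInput hK h2 hK2 d v
    rw [hv.restr_eq _ (hK.le.trans hA), hv.restr_eq h2 hA] at e
    simpa only [if_pos hv] using e
  · simp only [if_neg hv, mul_zero]

theorem tsum_podot_poplus_unitK_f {K h : PKernel Val Var} {R : Set Var} (hKR : K.ran ∩ R = ∅)
    (hran : (poplus K (unitK Val Var R)).ran = h.dom) (hh : ∀ x, IsDist (h.f x))
    (d : Mem Val Var (K.dom ∪ R)) :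
    ∑' m, (podot (poplus K (unitK Val Var R)) h).f d m =
      ∑' m, K.f (restr subset_union_left d) m := by
  have hh' : ∀ x, ∑' m, h.f x m = 1 := hh
  refine (tsum_podot_f hran d).trans ?_
  simp only [hh', mul_one]
  refine (tsum_poplus_f K (unitK Val Var R) d).trans ?_
  exact (tsum_dirac_mul _ _).trans (marg_eq_tsum_of_inter_eq_empty hKR _ _)

theorem ple_congr_left_of_isDist {K K' f : PKernel Val Var} (hKf : ple K f)
    (hf : ∀ d, IsDist (f.f d)) (hK : K.dom = ∅) (hdom : K'.dom = K.dom) (hran : K'.ran = K.ran)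
    (heq : ∀ d, IsDist (K.f d) → ∀ m, K'.f (restr hdom.le d) m = K.f d (restr hran.ge m)) :
    ple K' f := by
  obtain ⟨R, h, hh, hop, hhdom, rfl⟩ := hKf
  obtain ⟨D, S, k⟩ := K
  obtain ⟨D', S', k'⟩ := K'
  dsimp only at hK hdom hran heq
  subst D' S'
  refine ⟨R, h, hh, hop, hhdom, ?_⟩
  have hSR : S ∩ R = ∅ := by simpa [OplusDef, unitK, hK] using hop
  have hk : ∀ d : Mem Val Var (D ∪ R),
      k' (restr subset_union_left d) = k (restr subset_union_left d) := fun d =>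
    funext (heq _ ((tsum_podot_poplus_unitK_f hSR hhdom hh.2.1 d).symm.trans (hf d)))
  simp only [podot, poplus, unitK, hk]
  rfl

section Conditioning

open Classical

variable {A B : Set Var}

/- On a null conditioning event any extension of `a` would do; we push `ν` forward along
`glue a`. -/
noncomputable def condOn (ν : Mem Val Var B → ℝ≥0∞) (a : Mem Val Var A)
    (q : Mem Val Var (A ∪ B)) : ℝ≥0∞ :=
  if marg ν A a = 0 then ∑' b, if q = glue a b then ν b else 0
  else if restr subset_union_left q = a then ν (restr subset_union_right q) / marg ν A a else 0

theorem restr_eq_of_condOn_ne_zero {ν : Mem Val Var B → ℝ≥0∞} {a : Mem Val Var A}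
    {q : Mem Val Var (A ∪ B)} (hq : condOn ν a q ≠ 0) : restr subset_union_left q = a := by
  unfold condOn at hq
  split_ifs at hq with h0 hqa
  · obtain ⟨b, hb⟩ := not_forall.1 (mt ENNReal.tsum_eq_zero.2 hq)
    have hbq : q = glue a b := by_contra fun h => hb (if_neg h)
    rw [hbq, restr_glue_left]
  · exact hqa
  · exact absurd rfl hq

theorem isDist_condOn {ν : Mem Val Var B → ℝ≥0∞} (hν : IsDist ν) (a : Mem Val Var A) :
    IsDist (condOn ν a) := by
  unfold IsDist condOn
  split_ifs with h0
  · rw [ENNReal.tsum_comm]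
    simp only [tsum_ite_eq]
    exact hν
  · have hswap : ∀ a' b, (if Agree a' b then (if a' = a then ν b / marg ν A a else 0) else 0) =
        if a' = a then (if Agree a b then ν b / marg ν A a else 0) else 0 := by
      intro a' b
      by_cases h : a' = a <;> simp [h]
    calc ∑' q : Mem Val Var (A ∪ B), (if restr subset_union_left q = a then
            ν (restr subset_union_right q) / marg ν A a else 0)
        = ∑' a', ∑' b, if Agree a' b then (if a' = a then ν b / marg ν A a else 0) else 0 :=
          tsum_mem_union fun a' b => if a' = a then ν b / marg ν A a else 0
      _ = ∑' b, if Agree a b then ν b / marg ν A a else 0 := by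
          rw [ENNReal.tsum_comm]
          simp only [hswap, tsum_ite_eq]
      _ = (∑' b, if Agree b a then ν b else 0) / marg ν A a := by
          simp only [div_eq_mul_inv, ← ENNReal.tsum_mul_right, ite_mul, zero_mul, agree_comm]
      _ = 1 := ENNReal.div_self h0 (marg_ne_top hν a)

theorem marg_mul_condOn {ν : Mem Val Var B → ℝ≥0∞} (hν : IsDist ν) {a : Mem Val Var A}
    {q : Mem Val Var (A ∪ B)} (hq : restr subset_union_left q = a) :
    marg ν A a * condOn ν a q = ν (restr subset_union_right q) := by
  have hle : ν (restr subset_union_right q) ≤ marg ν A a :=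
    le_marg (hq ▸ agree_restr_restr subset_union_right subset_union_left q)
  by_cases h0 : marg ν A a = 0
  · rw [h0, zero_mul]
    exact (nonpos_iff_eq_zero.1 (h0 ▸ hle)).symm
  · rw [condOn, if_neg h0, if_pos hq, ENNReal.mul_div_cancel h0 (marg_ne_top hν a)]

end Conditioning

noncomputable def condKernel (K : PKernel Val Var) (A : Set Var) (hA : K.dom ⊆ A) :
    PKernel Val Var where
  dom := A
  ran := A ∪ K.ran
  f a := condOn (K.f (restr hA a)) a

noncomputable def margKernel (K : PKernel Val Var) (A : Set Var) : PKernel Val Var where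
  dom := K.dom
  ran := A
  f d := marg (K.f d) A

theorem inMD_condKernel {K : PKernel Val Var} {A : Set Var} (hA : K.dom ⊆ A)
    (hK : ∀ d, IsDist (K.f d)) : InMD (condKernel K A hA) :=
  inMD_iff.2 ⟨subset_union_left, fun a => isDist_condOn (hK _) a, fun a q hq =>
    (agree_iff_restr_eq subset_union_left q a).2 (restr_eq_of_condOn_ne_zero hq)⟩

section WeakUnion

variable {D Z A B C : Set Var} {k1 : Mem Val Var D → Mem Val Var Z → ℝ≥0∞}
  {k2 : Mem Val Var Z → Mem Val Var B → ℝ≥0∞} {k3 : Mem Val Var Z → Mem Val Var C → ℝ≥0∞}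

/- `poplus` multiplies the two mass functions even at pairs of outputs that disagree on `B ∩ C`;
such pairs lose mass, so total mass `1` forces `k2 z` to agree with `k3 z`-outcomes of positive
mass almost surely. -/
theorem marg_eq_one_of_isDist_podot_poplus (h1 : ∀ d, IsDist (k1 d)) (h2 : ∀ z, IsDist (k2 z))
    (h3 : ∀ z, IsDist (k3 z)) {d : Mem Val Var D}
    (hμ : IsDist ((podot ⟨D, Z, k1⟩ (poplus ⟨Z, B, k2⟩ ⟨Z, C, k3⟩)).f d)) {z : Mem Val Var Z}
    {v : Mem Val Var C} (hz : k1 d z ≠ 0) (hv : k3 z v ≠ 0) : marg (k2 z) C v = 1 := by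
  have hmarg : ∀ z v, marg (k2 z) C v ≤ 1 := fun z v => (h2 z) ▸ marg_le_tsum (k2 z) v
  have hmass : ∀ z, ∑' v, k3 z v * marg (k2 z) C v ≤ 1 := fun z =>
    (h3 z) ▸ ENNReal.tsum_le_tsum fun v => mul_le_of_le_one_right zero_le (hmarg z v)
  have htotal : ∑' z, k1 d z * ∑' v, k3 z v * marg (k2 z) C v = 1 :=
    calc _ = ∑' z, k1 d z *
            ∑' m, (poplus ⟨Z, B, k2⟩ ⟨Z, C, k3⟩).f (restr (union_self Z).le z) m :=
          tsum_congr fun z => congrArg (k1 d z * ·) (tsum_poplus_f _ _ _).symm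
      _ = 1 := (tsum_podot_f (K1 := ⟨D, Z, k1⟩) (union_self Z).symm d).symm.trans hμ
  exact eq_one_of_tsum_mul_eq_one (h3 z) (hmarg z)
    (eq_one_of_tsum_mul_eq_one (h1 d) hmass htotal hz) hv

theorem podot_margKernel_poplus_condKernel_f (h1 : InMD ⟨D, Z, k1⟩) (h2 : InMD ⟨Z, B, k2⟩)
    (h3 : InMD ⟨Z, C, k3⟩) (hZA : Z ⊆ A) (hAC : A ⊆ C) {d : Mem Val Var D}
    (hμ : IsDist ((podot ⟨D, Z, k1⟩ (poplus ⟨Z, B, k2⟩ ⟨Z, C, k3⟩)).f d))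
    (n : Mem Val Var (A ∪ B ∪ (A ∪ C))) :
    (podot (margKernel (podot ⟨D, Z, k1⟩ ⟨Z, C, k3⟩) A)
        (poplus (condKernel ⟨Z, B, k2⟩ A hZA) (condKernel ⟨Z, C, k3⟩ A hZA))).f d n =
      (podot ⟨D, Z, k1⟩ (poplus ⟨Z, B, k2⟩ ⟨Z, C, k3⟩)).f d
        (restr (union_subset_union subset_union_right subset_union_right) n) := by
  refine ((podot_f_of_extendsInput (K1 := margKernel (podot ⟨D, Z, k1⟩ ⟨Z, C, k3⟩) A)
    (K2 := poplus (condKernel ⟨Z, B, k2⟩ A hZA) (condKernel ⟨Z, C, k3⟩ A hZA))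
    (union_self A).symm (union_subset_union subset_union_left subset_union_left)
    ((inMD_condKernel hZA h2.2.1).extendsInput.poplus subset_union_left subset_union_left
      (inMD_condKernel hZA h3.2.1).extendsInput) d n).trans ?_).trans
    (podot_f_of_extendsInput (K1 := ⟨D, Z, k1⟩) (union_self Z).symm
      (union_subset_union h2.1 h3.1) (h2.extendsInput.poplus h2.1 h3.1 h3.extendsInput) d _).symm
  set a : Mem Val Var A := restr (subset_union_left.trans subset_union_left) n
  set z : Mem Val Var Z := restr hZA a
  set qB : Mem Val Var (A ∪ B) := restr subset_union_left n
  set qC : Mem Val Var (A ∪ C) := restr subset_union_right n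
  set b : Mem Val Var B := restr subset_union_right qB
  set c : Mem Val Var C := restr subset_union_right qC
  show marg (S := C) ((podot ⟨D, Z, k1⟩ ⟨Z, C, k3⟩).f d) A a *
      (condOn (k2 z) a qB * condOn (k3 z) a qC) = k1 d z * (k2 z b * k3 z c)
  have hmarg1 : marg (S := C) ((podot ⟨D, Z, k1⟩ ⟨Z, C, k3⟩).f d) A a =
      k1 d z * marg (k3 z) A a :=
    marg_podot_f (K1 := ⟨D, Z, k1⟩) rfl h3.1 h3.extendsInput hZA d a
  have hmarg3 : marg (k3 z) A a * condOn (k3 z) a qC = k3 z c :=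
    marg_mul_condOn (h3.2.1 z) rfl
  have hcond2 (hz : k1 d z ≠ 0) (hc : k3 z c ≠ 0) : condOn (k2 z) a qB = k2 z b := by
    have hm : marg (k2 z) A a = 1 := le_antisymm ((h2.2.1 z) ▸ marg_le_tsum _ _)
      ((marg_eq_one_of_isDist_podot_poplus h1.2.1 h2.2.1 h3.2.1 hμ hz hc) ▸
        marg_le_marg_restr hAC (k2 z) c)
    simpa only [hm, one_mul] using marg_mul_condOn (a := a) (q := qB) (h2.2.1 z) rfl
  calc _ = k1 d z * condOn (k2 z) a qB * (marg (k3 z) A a * condOn (k3 z) a qC) := by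
        rw [hmarg1]; ring
    _ = k1 d z * condOn (k2 z) a qB * k3 z c := by rw [hmarg3]
    _ = k1 d z * (k2 z b * k3 z c) := by
        by_cases hz : k1 d z = 0
        · simp only [hz, zero_mul]
        by_cases hc : k3 z c = 0
        · simp only [hc, mul_zero]
        rw [hcond2 hz hc, mul_assoc]

end WeakUnion

theorem weak_union_probabilistic_general {Val Var : Type}
    (f : PKernel Val Var) (hf : InMD f) (Z X Y W : Set Var)
    (h : ∃ f1 f2 f3 : PKernel Val Var,
        InMD f1 ∧ InMD f2 ∧ InMD f3 ∧
        f1.dom = (∅ : Set Var) ∧ f1.ran = Z ∧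
        f2.dom = Z ∧ f2.ran = Z ∪ X ∧
        f3.dom = Z ∧ f3.ran = Z ∪ Y ∪ W ∧
        ple (podot f1 (poplus f2 f3)) f) :
    ∃ g1 g2 g3 : PKernel Val Var,
        InMD g1 ∧ InMD g2 ∧ InMD g3 ∧
        g1.dom = (∅ : Set Var) ∧ g1.ran = Z ∪ W ∧
        g2.dom = Z ∪ W ∧ g2.ran = Z ∪ W ∪ X ∧
        g3.dom = Z ∪ W ∧ g3.ran = Z ∪ W ∪ Y ∧
        ple (podot g1 (poplus g2 g3)) f := by
  obtain ⟨⟨D1, Z1, k1⟩, ⟨Z2, B, k2⟩, ⟨Z3, C, k3⟩, hf1, hf2, hf3, h1d, h1r, h2d, h2r, h3d, h3r,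
    hple⟩ := h
  dsimp only at h1d h1r h2d h2r h3d h3r
  subst D1 Z1 Z2 Z3 B C
  have hZA : Z ⊆ Z ∪ W := subset_union_left
  have hAC : Z ∪ W ⊆ Z ∪ Y ∪ W := by tauto_set
  have hg1 : InMD (margKernel (podot ⟨∅, Z, k1⟩ ⟨Z, Z ∪ Y ∪ W, k3⟩) (Z ∪ W)) :=
    inMD_of_dom_eq_empty rfl fun d =>
      (tsum_marg hAC _).trans (isDist_podot rfl (hf1.2.1 d) hf3.2.1)
  refine ⟨_, condKernel ⟨Z, Z ∪ X, k2⟩ (Z ∪ W) hZA, condKernel ⟨Z, Z ∪ Y ∪ W, k3⟩ (Z ∪ W) hZA,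
    hg1, inMD_condKernel hZA hf2.2.1, inMD_condKernel hZA hf3.2.1, rfl, rfl, rfl,
    (by tauto_set : Z ∪ W ∪ (Z ∪ X) = Z ∪ W ∪ X), rfl,
    (by tauto_set : Z ∪ W ∪ (Z ∪ Y ∪ W) = Z ∪ W ∪ Y), ?_⟩
  refine ple_congr_left_of_isDist hple hf.2.1 rfl rfl
    (by tauto_set : Z ∪ W ∪ (Z ∪ X) ∪ (Z ∪ W ∪ (Z ∪ Y ∪ W)) = Z ∪ X ∪ (Z ∪ Y ∪ W)) fun d hd => ?_
  exact podot_margKernel_poplus_condKernel_f hf1 hf2 hf3 hZA hAC hd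

/-- **Weak Union in the probabilistic model.** Let `f ∈ M^D` and
`Z, X, Y, W ⊆ Var`. If there are `f1 : Mem(∅) → D(Mem(Z))`,
`f2 : Mem(Z) → D(Mem(Z ∪ X))`, `f3 : Mem(Z) → D(Mem(Z ∪ Y ∪ W))` in `M^D` with
`f1 ⊙ (f2 ⊕ f3) ⊑ f`, then there are `g1 : Mem(∅) → D(Mem(Z ∪ W))`,
`g2 : Mem(Z ∪ W) → D(Mem(Z ∪ W ∪ X))`, `g3 : Mem(Z ∪ W) → D(Mem(Z ∪ W ∪ Y))` in
`M^D` with `g1 ⊙ (g2 ⊕ g3) ⊑ f`. -/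
theorem weak_union_probabilistic {Val Var : Type} [Fintype Val] [Fintype Var]
    (f : PKernel Val Var) (hf : InMD f) (Z X Y W : Set Var)
    (h : ∃ f1 f2 f3 : PKernel Val Var,
        InMD f1 ∧ InMD f2 ∧ InMD f3 ∧
        f1.dom = (∅ : Set Var) ∧ f1.ran = Z ∧
        f2.dom = Z ∧ f2.ran = Z ∪ X ∧
        f3.dom = Z ∧ f3.ran = Z ∪ Y ∪ W ∧
        ple (podot f1 (poplus f2 f3)) f) :
    ∃ g1 g2 g3 : PKernel Val Var,
        InMD g1 ∧ InMD g2 ∧ InMD g3 ∧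
        g1.dom = (∅ : Set Var) ∧ g1.ran = Z ∪ W ∧
        g2.dom = Z ∪ W ∧ g2.ran = Z ∪ W ∪ X ∧
        g3.dom = Z ∪ W ∧ g3.ran = Z ∪ W ∪ Y ∧
        ple (podot g1 (poplus g2 g3)) f :=
  weak_union_probabilistic_general f hf Z X Y W h
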